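/- Let $C_{10} > 0$, $\alpha \in (0,1)$, and let $f : [R, \infty) \to [0,\infty)$ be a non-increasing function with $\lim_{r\to\infty} f(r) = 0$ satisfying $C_{10} \int_r^\infty f(t)^\alpha\,dt \leq f(r)$ for all $r \geq R$. If $f(R)$ is sufficiently small (depending only on $C_{10}$ and $\alpha$), then $f(R+1) = 0$. -/

import Mathlib

open MeasureTheory
open scoped ENNReal

/-!
Put `R_k := R + 1 - 2 ^ (-k)` and `w_k := f R_k`. Bounding the tail integral at `R_k` from below by
its part over `[R_k, R_{k+1}]`, where `f ≥ f R_{k+1}`, gives `C 2 ^ (-(k+1)) w_{k+1} ^ α ≤ w_k`.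
Since `α < 1` this recursion forces geometric decay `w_k ≤ δ q ^ k` once `w_0 ≤ δ`, and
`f (R + 1) ≤ w_k` for every `k`.
-/

theorem mul_sub_mul_rpow_le_of_lintegral_Ici_le {f : ℝ → ℝ} {C α a b : ℝ} (hC : 0 ≤ C)
    (hα : 0 ≤ α) (hab : a ≤ b) (hfa : 0 ≤ f a) (hfb : 0 ≤ f b) (hf : AntitoneOn f (Set.Icc a b))
    (h : ENNReal.ofReal C * ∫⁻ t in Set.Ici a, ENNReal.ofReal (f t ^ α) ≤ ENNReal.ofReal (f a)) :
    C * (b - a) * f b ^ α ≤ f a := by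
  have hmin : ∀ t ∈ Set.Ioc a b, ENNReal.ofReal (f b ^ α) ≤ ENNReal.ofReal (f t ^ α) :=
    fun t ht => ENNReal.ofReal_le_ofReal <| Real.rpow_le_rpow hfb
      (hf ⟨ht.1.le, ht.2⟩ ⟨hab, le_rfl⟩ ht.2) hα
  rw [← ENNReal.ofReal_le_ofReal_iff hfa]
  calc ENNReal.ofReal (C * (b - a) * f b ^ α)
      = ENNReal.ofReal C * ∫⁻ _ in Set.Ioc a b, ENNReal.ofReal (f b ^ α) := by
        rw [setLIntegral_const, Real.volume_Ioc, mul_assoc, mul_comm (b - a),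
          ENNReal.ofReal_mul hC, ENNReal.ofReal_mul (by positivity)]
    _ ≤ ENNReal.ofReal C * ∫⁻ t in Set.Ici a, ENNReal.ofReal (f t ^ α) := by
        gcongr ENNReal.ofReal C * ?_
        exact (setLIntegral_mono' measurableSet_Ioc hmin).trans
          (lintegral_mono_set fun _ ht => Set.mem_Ici.mpr ht.1.le)
    _ ≤ ENNReal.ofReal (f a) := h

/- `q ^ (1 - α) = 1 / 2` and `δ ^ (1 - α) = C q / 2`: with these the induction step in
`le_smallnessThreshold_mul_decayRatio_pow` closes with equality. -/
noncomputable def decayRatio (α : ℝ) : ℝ := (1 / 2) ^ (1 - α)⁻¹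

noncomputable def smallnessThreshold (C α : ℝ) : ℝ := (C * decayRatio α / 2) ^ (1 - α)⁻¹

section
variable {C α : ℝ}

theorem decayRatio_pos : 0 < decayRatio α := by unfold decayRatio; positivity

theorem decayRatio_lt_one (hα : α < 1) : decayRatio α < 1 :=
  Real.rpow_lt_one (by norm_num) (by norm_num) (by simpa using hα)

theorem decayRatio_rpow (hα : α < 1) : decayRatio α ^ (1 - α) = 1 / 2 :=
  Real.rpow_inv_rpow (by norm_num) (by linarith)

theorem smallnessThreshold_pos (hC : 0 < C) : 0 < smallnessThreshold C α := by
  have := decayRatio_pos (α := α)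
  unfold smallnessThreshold; positivity

theorem smallnessThreshold_rpow (hC : 0 ≤ C) (hα : α < 1) :
    smallnessThreshold C α ^ (1 - α) = C * decayRatio α / 2 :=
  Real.rpow_inv_rpow (by have := decayRatio_pos (α := α); positivity) (by linarith)

/- Split `w (k + 1) = w (k + 1) ^ α * w (k + 1) ^ (1 - α)`: the recursion bounds the first
factor, monotonicity (`w (k + 1) ≤ w k`) the second. -/
theorem le_smallnessThreshold_mul_decayRatio_pow {w : ℕ → ℝ} (hC : 0 < C) (hα : α < 1)
    (hw : ∀ k, 0 ≤ w k) (hanti : Antitone w)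
    (hstep : ∀ k : ℕ, C * (1 / 2) ^ (k + 1) * w (k + 1) ^ α ≤ w k)
    (h0 : w 0 ≤ smallnessThreshold C α) (k : ℕ) :
    w k ≤ smallnessThreshold C α * decayRatio α ^ k := by
  set δ := smallnessThreshold C α
  set q := decayRatio α
  have hq : 0 < q := decayRatio_pos
  have hδ : 0 < δ := smallnessThreshold_pos hC
  induction k with
  | zero => simpa using h0
  | succ k ih =>
    have hpow : w (k + 1) ^ α ≤ 2 ^ (k + 1) / C * (δ * q ^ k) := by
      rw [div_mul_eq_mul_div, le_div_iff₀ hC]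
      calc w (k + 1) ^ α * C = 2 ^ (k + 1) * (C * (1 / 2) ^ (k + 1) * w (k + 1) ^ α) := by
            rw [one_div_pow]; field_simp
        _ ≤ 2 ^ (k + 1) * (δ * q ^ k) :=
            mul_le_mul_of_nonneg_left ((hstep k).trans ih) (by positivity)
    have hrest : w (k + 1) ^ (1 - α) ≤ C * q / 2 * (1 / 2) ^ k := by
      calc w (k + 1) ^ (1 - α) ≤ (δ * q ^ k) ^ (1 - α) :=
            Real.rpow_le_rpow (hw _) ((hanti k.le_succ).trans ih) (by linarith)
        _ = C * q / 2 * (1 / 2) ^ k := by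
            rw [Real.mul_rpow hδ.le (by positivity),
              ← Real.rpow_pow_comm hq.le, smallnessThreshold_rpow hC.le hα, decayRatio_rpow hα]
    calc w (k + 1) = w (k + 1) ^ α * w (k + 1) ^ (1 - α) := by
          rw [← Real.rpow_add' (hw _) (by simp), add_sub_cancel, Real.rpow_one]
      _ ≤ 2 ^ (k + 1) / C * (δ * q ^ k) * (C * q / 2 * (1 / 2) ^ k) :=
          mul_le_mul hpow hrest (Real.rpow_nonneg (hw _) _) (by positivity)
      _ = δ * q ^ (k + 1) := by
          rw [one_div_pow]
          field_simp
          ring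
end

theorem iteration_lemma {C₁₀ : ℝ} (hC : 0 < C₁₀) {α : ℝ} (hα0 : 0 < α) (hα1 : α < 1) :
    ∃ δ > (0 : ℝ), ∀ (R : ℝ) (f : ℝ → ℝ),
      (∀ r ∈ Set.Ici R, 0 ≤ f r) →
      AntitoneOn f (Set.Ici R) →
      Filter.Tendsto f Filter.atTop (nhds 0) →
      (∀ r ∈ Set.Ici R,
        ENNReal.ofReal C₁₀ * ∫⁻ t in Set.Ici r, ENNReal.ofReal (f t ^ α)
          ≤ ENNReal.ofReal (f r)) →
      f R ≤ δ → f (R + 1) = 0 := by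
  refine ⟨smallnessThreshold C₁₀ α, smallnessThreshold_pos hC, ?_⟩
  intro R f hf0 hanti _ hint hfR
  set r : ℕ → ℝ := fun k => R + 1 - (1 / 2) ^ k
  have hr_succ (k : ℕ) : r (k + 1) - r k = (1 / 2) ^ (k + 1) := by simp only [r]; ring
  have hr_mono : Monotone r := monotone_nat_of_le_succ fun k => by
    linarith [hr_succ k, (by positivity : (0 : ℝ) < (1 / 2) ^ (k + 1))]
  have hr_le (k : ℕ) : r k ≤ R + 1 := by
    simp only [r]; linarith [(by positivity : (0 : ℝ) < (1 / 2) ^ k)]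
  have hr_mem (k : ℕ) : r k ∈ Set.Ici R := by simpa [r] using hr_mono (Nat.zero_le k)
  have hR1 : R + 1 ∈ Set.Ici R := (hr_mem 0).trans (hr_le 0)
  have hstep (k : ℕ) : C₁₀ * (1 / 2) ^ (k + 1) * f (r (k + 1)) ^ α ≤ f (r k) := by
    rw [← hr_succ]
    exact mul_sub_mul_rpow_le_of_lintegral_Ici_le hC.le hα0.le (hr_mono k.le_succ)
      (hf0 _ (hr_mem k)) (hf0 _ (hr_mem _))
      (hanti.mono (Set.Icc_subset_Ici_self.trans (Set.Ici_subset_Ici.mpr (hr_mem k))))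
      (hint _ (hr_mem k))
  have hbound := le_smallnessThreshold_mul_decayRatio_pow (w := f ∘ r) hC hα1
    (fun k => hf0 _ (hr_mem k)) (fun _ _ hkl => hanti (hr_mem _) (hr_mem _) (hr_mono hkl))
    hstep (by simpa [r] using hfR)
  have hlim : Filter.Tendsto (fun k : ℕ => smallnessThreshold C₁₀ α * decayRatio α ^ k)
      Filter.atTop (nhds 0) := by
    simpa using (tendsto_pow_atTop_nhds_zero_of_lt_one decayRatio_pos.le
      (decayRatio_lt_one hα1)).const_mul (smallnessThreshold C₁₀ α)
  exact le_antisymm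
    (ge_of_tendsto' hlim fun k => (hanti (hr_mem k) hR1 (hr_le k)).trans (hbound k))
    (hf0 _ hR1)
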